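/- Let k ≥ 4, m = 2^k − 1, m' = 2^{k−3} − 1, and let Q_m be the Fibonacci polynomial lattice point set Q(f_{m+1}, (1, f_m)) in base 2 with 2^m points. For n = 2^{m−m'−2} − 2^{m'−1} and n' = 2^{m−m'−2} + 2^{m'−1}, the points x_n and x_{n'} of Q_m satisfy ‖x_n − x_{n'}‖_∞ = 2^{−m+m'}. In particular, with N = 2^m, the separation radius satisfies q_∞(Q_m) ≤ 2^{−15/8} N^{−7/8}. -/

import Mathlib

open Polynomial

/-- The Fibonacci polynomials over `F_2`: `f_0 = 0`, `f_1 = 1`, `f_2 = x`,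
`f_{n+2} = x f_{n+1} + f_n`. -/
noncomputable def fib2 : ℕ → Polynomial (ZMod 2)
  | 0 => 0
  | 1 => 1
  | n + 2 => X * fib2 (n + 1) + fib2 n

/-- The polynomial `n(x) = n_0 + n_1 x + ⋯` whose coefficients are the binary digits of `n`. -/
noncomputable def natPoly (n : ℕ) : Polynomial (ZMod 2) :=
  ∑ i ∈ Finset.range (Nat.digits 2 n).length,
    C ((Nat.digits 2 n).getD i 0 : ZMod 2) * X ^ i

/-- The `i`-th digit (`i ≥ 1`) of the expansion `n(x)q(x)/p(x) = ⋯ + Σ_{i≥1} t_i x^{−i}` at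
infinity (for monic `p` of degree `m`): `t_i` is the coefficient of `x^{m−1}` in
`(n(x)·q(x)·x^{i−1}) mod p(x)`. -/
noncomputable def plDigit (p q : Polynomial (ZMod 2)) (n i : ℕ) : ZMod 2 :=
  ((natPoly n * q * X ^ (i - 1)) % p).coeff (p.natDegree - 1)

/-- The coordinate `ν_m(n(x)q(x)/p(x)) = Σ_{i=1}^m t_i 2^{−i}` of the polynomial lattice
point set `Q(p,(q_1,q_2))` in base 2, where `m = deg p`. -/
noncomputable def plCoord (p q : Polynomial (ZMod 2)) (n : ℕ) : ℝ :=
  ∑ i ∈ Finset.Icc 1 p.natDegree, ((plDigit p q n i).val : ℝ) / 2 ^ i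

lemma fib2_add_two (n : ℕ) : fib2 (n + 2) = X * fib2 (n + 1) + fib2 n := rfl

lemma fib2_double (n : ℕ) :
    fib2 (2 * n) = X * (fib2 n) ^ 2 ∧ fib2 (2 * n + 1) = (fib2 (n + 1)) ^ 2 + (fib2 n) ^ 2 := by
  induction n with
  | zero => simp [fib2]
  | succ n ih =>
    obtain ⟨h1, h2⟩ := ih
    have e1 : 2 * (n + 1) = (2 * n) + 2 := by ring
    have e2 : 2 * (n + 1) + 1 = (2 * n + 1) + 2 := by ring
    have hd : fib2 (2 * (n + 1)) = X * (fib2 (n + 1)) ^ 2 := by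
      rw [e1, fib2_add_two, h1, h2, mul_add, add_assoc, CharTwo.add_self_eq_zero, add_zero]
    refine ⟨hd, ?_⟩
    rw [e2, fib2_add_two, ← e1, hd, h2, fib2_add_two, CharTwo.add_sq, mul_pow]
    ring

lemma fib2_two_pow (k : ℕ) : fib2 (2 ^ k) = X ^ (2 ^ k - 1) := by
  induction k with
  | zero => simp [fib2]
  | succ k ih =>
    have h1 : 1 ≤ 2 ^ k := Nat.one_le_two_pow
    have e : 2 ^ (k + 1) = 2 * 2 ^ k := by ring
    rw [e, (fib2_double _).1, ih, ← pow_mul, ← pow_succ']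
    congr 1
    omega

lemma fib2_pow_sub_one (k : ℕ) (hk : 1 ≤ k) :
    fib2 (2 ^ k - 1) = 1 + ∑ ℓ ∈ Finset.Ico 1 k, X ^ (2 ^ k - 2 ^ ℓ) := by
  induction k, hk using Nat.le_induction with
  | base => simp [fib2]
  | succ k hk ih =>
    have h1 : 1 ≤ 2 ^ k := Nat.one_le_two_pow
    have e : 2 ^ (k + 1) - 1 = 2 * (2 ^ k - 1) + 1 := by
      have : 2 ^ (k + 1) = 2 * 2 ^ k := by ring
      omega
    have e2 : 2 ^ k - 1 + 1 = 2 ^ k := by omega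
    rw [e, (fib2_double _).2, e2, fib2_two_pow, ih, ← pow_mul, CharTwo.add_sq, one_pow,
      CharTwo.sum_sq]
    have hsq : ∀ ℓ : ℕ, (X ^ (2 ^ k - 2 ^ ℓ) : Polynomial (ZMod 2)) ^ 2
        = X ^ (2 ^ (k + 1) - 2 ^ (ℓ + 1)) := by
      intro ℓ
      rw [← pow_mul]
      congr 1
      have : 2 ^ (k+1) = 2 * 2 ^ k := by ring
      have : 2 ^ (ℓ+1) = 2 * 2 ^ ℓ := by ring
      omega
    have hre : ∑ ℓ ∈ Finset.Ico 1 k, (X ^ (2 ^ k - 2 ^ ℓ) : Polynomial (ZMod 2)) ^ 2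
        = ∑ ℓ ∈ Finset.Ico 2 (k + 1), X ^ (2 ^ (k + 1) - 2 ^ ℓ) := by
      simp_rw [hsq]
      rw [Finset.sum_Ico_eq_sum_range, Finset.sum_Ico_eq_sum_range]
      apply Finset.sum_congr (by congr 1 <;> omega)
      intro i _
      have h : 1 + i + 1 = 2 + i := by omega
      rw [h]
    rw [hre, Finset.sum_eq_sum_Ico_succ_bot (by omega : 1 < k + 1)]
    have : 2 ^ (k + 1) - 2 ^ 1 = (2 ^ k - 1) * 2 := by
      have : 2 ^ (k+1) = 2 * 2 ^ k := by ring
      omega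
    rw [this]
    ring


lemma digits_getD (n : ℕ) : ∀ e, (Nat.digits 2 n).getD e 0 = n / 2 ^ e % 2 := by
  induction n using Nat.strong_induction_on with
  | _ n ih =>
    intro e
    rcases Nat.eq_zero_or_pos n with h | h
    · simp [h]
    · rw [Nat.digits_def' (by norm_num : 1 < 2) h]
      cases e with
      | zero => simp
      | succ e =>
        have := ih (n / 2) (Nat.div_lt_self h (by norm_num)) e
        simpa [Nat.div_div_eq_div_mul, pow_succ'] using this

lemma natPoly_coeff (n e : ℕ) : (natPoly n).coeff e = ((n / 2 ^ e % 2 : ℕ) : ZMod 2) := by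
  rw [natPoly, Polynomial.finset_sum_coeff]
  simp only [Polynomial.coeff_C_mul, Polynomial.coeff_X_pow, mul_ite, mul_one, mul_zero]
  rw [Finset.sum_ite_eq (Finset.range _) e]
  by_cases h : e < (Nat.digits 2 n).length
  · rw [if_pos (Finset.mem_range.2 h), digits_getD]
  · rw [if_neg (by simpa using h)]
    have hlt : n < 2 ^ e := lt_of_lt_of_le (Nat.lt_base_pow_length_digits (by norm_num))
      (Nat.pow_le_pow_right (by norm_num) (by omega))
    rw [Nat.div_eq_of_lt hlt]
    simp

lemma div_pow_sub (a b e : ℕ) (hba : b < a) :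
    (2 ^ a - 2 ^ b) / 2 ^ e % 2 = if b ≤ e ∧ e < a then 1 else 0 := by
  rcases lt_or_ge e b with hb | hb
  · have h3 : 2 ^ a - 2 ^ b = 2 ^ e * (2 ^ (a - e) - 2 ^ (b - e)) := by
      rw [Nat.mul_sub, ← pow_add, ← pow_add]
      congr 2 <;> omega
    rw [h3, Nat.mul_div_cancel_left _ (Nat.pow_pos (n := e) (by norm_num)), if_neg (by omega)]
    have h4 : 2 ^ (a - e) = 2 * 2 ^ (a - e - 1) := by rw [← pow_succ']; congr 1; omega
    have h5 : 2 ^ (b - e) = 2 * 2 ^ (b - e - 1) := by rw [← pow_succ']; congr 1; omega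
    omega
  · rcases lt_or_ge e a with ha | ha
    · have h4 : 2 ^ e * (2 ^ (a - e) - 1) = 2 ^ a - 2 ^ e := by
        rw [Nat.mul_sub, mul_one, ← pow_add]
        congr 2
        omega
      have hbe : 2 ^ b ≤ 2 ^ e := Nat.pow_le_pow_right (by norm_num) hb
      have hea : 2 ^ e ≤ 2 ^ a := Nat.pow_le_pow_right (by norm_num) (le_of_lt ha)
      have hb0 : 0 < 2 ^ b := Nat.pow_pos (n := _) (by norm_num)
      have h3 : 2 ^ a - 2 ^ b = (2 ^ e - 2 ^ b) + (2 ^ (a - e) - 1) * 2 ^ e := by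
        rw [mul_comm ((2:ℕ) ^ (a - e) - 1) (2 ^ e), h4]
        omega
      rw [h3, Nat.add_mul_div_right _ _ (Nat.pow_pos (n := e) (by norm_num)),
        Nat.div_eq_of_lt (by omega), if_pos ⟨hb, ha⟩]
      have h6 : 2 ^ (a - e) = 2 * 2 ^ (a - e - 1) := by rw [← pow_succ']; congr 1; omega
      have h7 : 0 < 2 ^ (a - e - 1) := Nat.pow_pos (n := _) (by norm_num)
      omega
    · have hlt : 2 ^ a - 2 ^ b < 2 ^ e :=
        lt_of_lt_of_le (Nat.sub_lt (Nat.pow_pos (n := a) (by norm_num))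
          (Nat.pow_pos (n := b) (by norm_num))) (Nat.pow_le_pow_right (by norm_num) ha)
      rw [Nat.div_eq_of_lt hlt, if_neg (by omega)]

lemma div_pow_add (a b e : ℕ) (hba : b < a) :
    (2 ^ a + 2 ^ b) / 2 ^ e % 2 = if e = a ∨ e = b then 1 else 0 := by
  rcases lt_or_ge e b with hb | hb
  · have h3 : 2 ^ a + 2 ^ b = 2 ^ e * (2 ^ (a - e) + 2 ^ (b - e)) := by
      rw [Nat.mul_add, ← pow_add, ← pow_add]
      congr 2 <;> omega
    rw [h3, Nat.mul_div_cancel_left _ (Nat.pow_pos (n := e) (by norm_num)), if_neg (by omega)]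
    have h4 : 2 ^ (a - e) = 2 * 2 ^ (a - e - 1) := by rw [← pow_succ']; congr 1; omega
    have h5 : 2 ^ (b - e) = 2 * 2 ^ (b - e - 1) := by rw [← pow_succ']; congr 1; omega
    omega
  · rcases lt_or_ge a e with ha | ha
    · have hlt : 2 ^ a + 2 ^ b < 2 ^ e := by
        have h1 : 2 ^ b < 2 ^ a := Nat.pow_lt_pow_right (by norm_num) hba
        have h2 : 2 ^ (a + 1) ≤ 2 ^ e := Nat.pow_le_pow_right (by norm_num) (by omega)
        have h3 : 2 ^ (a + 1) = 2 * 2 ^ a := by rw [← pow_succ']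
        omega
      rw [Nat.div_eq_of_lt hlt, if_neg (by omega)]
    · have hbe : 2 ^ b ≤ 2 ^ e := Nat.pow_le_pow_right (by norm_num) hb
      have h3 : 2 ^ a + 2 ^ b = 2 ^ b + 2 ^ (a - e) * 2 ^ e := by
        rw [← pow_add]
        have he : a - e + e = a := by omega
        rw [he, Nat.add_comm]
      rw [h3, Nat.add_mul_div_right _ _ (Nat.pow_pos (n := e) (by norm_num))]
      rcases eq_or_lt_of_le hb with rfl | hbe2
      · rw [Nat.div_self (Nat.pow_pos (n := _) (by norm_num : (0:ℕ) < 2)), if_pos (Or.inr rfl)]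
        have h6 : 2 ^ (a - b) = 2 * 2 ^ (a - b - 1) := by rw [← pow_succ']; congr 1; omega
        omega
      · have hblt : 2 ^ b < 2 ^ e := Nat.pow_lt_pow_right (by norm_num) hbe2
        rw [Nat.div_eq_of_lt hblt]
        rcases eq_or_lt_of_le ha with rfl | hea
        · rw [if_pos (Or.inl rfl)]
          simp [Nat.sub_self]
        · rw [if_neg (by omega)]
          have h6 : 2 ^ (a - e) = 2 * 2 ^ (a - e - 1) := by rw [← pow_succ']; congr 1; omega
          omega

lemma natPoly_sub_coeff (a b e : ℕ) (h : b < a) :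
    (natPoly (2 ^ a - 2 ^ b)).coeff e = if b ≤ e ∧ e < a then 1 else 0 := by
  rw [natPoly_coeff, div_pow_sub a b e h]
  split_ifs <;> simp

lemma natPoly_add_coeff (a b e : ℕ) (h : b < a) :
    (natPoly (2 ^ a + 2 ^ b)).coeff e = if e = a ∨ e = b then 1 else 0 := by
  rw [natPoly_coeff, div_pow_add a b e h]
  split_ifs <;> simp

lemma modByMonic_X_pow_coeff (P : Polynomial (ZMod 2)) (m j : ℕ) (hj : j < m) :
    (P %ₘ (X ^ m)).coeff j = P.coeff j := by
  conv_rhs => rw [← Polynomial.modByMonic_add_div P (X ^ m)]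
  rw [Polynomial.coeff_add, (Polynomial.commute_X_pow _ m).eq, Polynomial.coeff_mul_X_pow',
    if_neg (by omega), add_zero]

lemma plDigit_X_pow (m : ℕ) (q : Polynomial (ZMod 2)) (n i : ℕ) (h1 : 1 ≤ i) (h2 : i ≤ m) :
    plDigit (X ^ m) q n i = (natPoly n * q).coeff (m - i) := by
  unfold plDigit
  rw [Polynomial.mod_def]
  simp only [Polynomial.leadingCoeff_X_pow, inv_one, map_one, mul_one, Polynomial.natDegree_X_pow]
  rw [modByMonic_X_pow_coeff _ _ _ (by omega), Polynomial.coeff_mul_X_pow', if_pos (by omega)]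
  congr 1
  omega

lemma coeff_mul_one_add_sum (P : Polynomial (ZMod 2)) (k e : ℕ) :
    (P * (1 + ∑ ℓ ∈ Finset.Ico 1 k, X ^ (2 ^ k - 2 ^ ℓ))).coeff e
      = P.coeff e + ∑ ℓ ∈ Finset.Ico 1 k,
          (if 2 ^ k - 2 ^ ℓ ≤ e then P.coeff (e - (2 ^ k - 2 ^ ℓ)) else 0) := by
  rw [mul_add, mul_one, Polynomial.coeff_add, Finset.mul_sum, Polynomial.finset_sum_coeff]
  simp_rw [Polynomial.coeff_mul_X_pow']

section main
variable (k t : ℕ)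

lemma pow_facts (hk : 4 ≤ k) (ht : t = 2 ^ (k - 3)) :
    2 ≤ t ∧ 2 ^ k = 8 * t ∧ 2 ^ (k - 1) = 4 * t ∧ 2 ^ (k - 2) = 2 * t := by
  have h1 : 2 ^ k = 2 ^ (k - 3) * 2 ^ 3 := by
    rw [← pow_add]
    congr 1
    omega
  have h2 : 2 ^ (k - 1) = 2 ^ (k - 3) * 2 ^ 2 := by
    rw [← pow_add]
    congr 1
    omega
  have h3 : 2 ^ (k - 2) = 2 ^ (k - 3) * 2 ^ 1 := by
    rw [← pow_add]
    congr 1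
    omega
  norm_num at h1 h2 h3
  have h4 : (2:ℕ) ^ 1 ≤ 2 ^ (k - 3) := Nat.pow_le_pow_right (by norm_num) (by omega)
  omega

lemma sum_small_zero (hk : 4 ≤ k) (ht : t = 2 ^ (k - 3)) (e : ℕ) (he : e ≤ 8 * t - 2)
    (P : Polynomial (ZMod 2)) (hP : ∀ e', e' < t - 2 → P.coeff e' = 0) :
    ∑ ℓ ∈ Finset.Ico 1 (k - 3),
      (if 2 ^ k - 2 ^ ℓ ≤ e then P.coeff (e - (2 ^ k - 2 ^ ℓ)) else 0) = 0 := by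
  obtain ⟨ht2, h8, h4, h2⟩ := pow_facts k t hk ht
  apply Finset.sum_eq_zero
  intro ℓ hℓ
  rw [Finset.mem_Ico] at hℓ
  have hp1 : 2 ^ (ℓ + 1) ≤ 2 ^ (k - 3) := Nat.pow_le_pow_right (by norm_num) (by omega)
  have hp2 : 2 ^ (ℓ + 1) = 2 * 2 ^ ℓ := by rw [pow_succ']
  split_ifs with h
  · exact hP _ (by omega)
  · rfl

lemma ydigit_n (hk : 4 ≤ k) (ht : t = 2 ^ (k - 3)) (e : ℕ) (he : e ≤ 8 * t - 2) :
    (natPoly (2 ^ (7 * t - 2) - 2 ^ (t - 2)) * fib2 (2 ^ k - 1)).coeff e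
      = if (t - 2 ≤ e ∧ e ≤ 5 * t - 3) ∨ e = 8 * t - 2 then 1 else 0 := by
  obtain ⟨ht2, h8, h4, h2⟩ := pow_facts k t hk ht
  have hc : ∀ e', (natPoly (2 ^ (7 * t - 2) - 2 ^ (t - 2))).coeff e'
      = if t - 2 ≤ e' ∧ e' < 7 * t - 2 then 1 else 0 :=
    fun e' => natPoly_sub_coeff _ _ e' (by omega)
  have hA : ∀ ℓ ∈ Finset.Ico (k - 3) k,
      (if 2 ^ k - 2 ^ ℓ ≤ e
        then (natPoly (2 ^ (7 * t - 2) - 2 ^ (t - 2))).coeff (e - (2 ^ k - 2 ^ ℓ)) else 0)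
      = if 2 ^ k - 2 ^ ℓ + (t - 2) ≤ e then 1 else 0 := by
    intro l hl
    rw [Finset.mem_Ico] at hl
    have hx1 : 2 ^ (k - 3) ≤ 2 ^ l := Nat.pow_le_pow_right (by norm_num) hl.1
    have hx2 : 2 ^ l ≤ 2 ^ (k - 1) := Nat.pow_le_pow_right (by norm_num) (by omega)
    rw [hc]
    split_ifs <;> first | rfl | (exfalso; omega)
  rw [fib2_pow_sub_one k (by omega), coeff_mul_one_add_sum,
    ← Finset.sum_Ico_consecutive _ (by omega : 1 ≤ k - 3) (by omega : k - 3 ≤ k),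
    sum_small_zero k t hk ht e he _ (fun e' he' => by rw [hc]; rw [if_neg (by omega)]),
    zero_add, Finset.sum_congr rfl hA]
  have e1 : Finset.Ico (k - 3) k = Finset.Ico (k - 3) (k - 1 + 1) := by congr 1; omega
  rw [e1, Finset.sum_Ico_succ_top (by omega),
    show Finset.Ico (k - 3) (k - 1) = Finset.Ico (k - 3) (k - 2 + 1) by congr 1; omega,
    Finset.sum_Ico_succ_top (by omega),
    show Finset.Ico (k - 3) (k - 2) = Finset.Ico (k - 3) (k - 3 + 1) by congr 1; omega,
    Finset.sum_Ico_succ_top (by omega), Finset.Ico_self, Finset.sum_empty, zero_add]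
  rw [h8, h4, h2, ht.symm, hc]
  split_ifs <;> first | rfl | decide | (exfalso; omega)

lemma ydigit_n' (hk : 4 ≤ k) (ht : t = 2 ^ (k - 3)) (e : ℕ) (he : e ≤ 8 * t - 2) :
    (natPoly (2 ^ (7 * t - 2) + 2 ^ (t - 2)) * fib2 (2 ^ k - 1)).coeff e
      = if e = 8 * t - 2 ∨ e = 5 * t - 2 ∨ e = t - 2 then 1 else 0 := by
  obtain ⟨ht2, h8, h4, h2⟩ := pow_facts k t hk ht
  have hc : ∀ e', (natPoly (2 ^ (7 * t - 2) + 2 ^ (t - 2))).coeff e'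
      = if e' = 7 * t - 2 ∨ e' = t - 2 then 1 else 0 :=
    fun e' => natPoly_add_coeff _ _ e' (by omega)
  have hA : ∀ ℓ ∈ Finset.Ico (k - 3) k,
      (if 2 ^ k - 2 ^ ℓ ≤ e
        then (natPoly (2 ^ (7 * t - 2) + 2 ^ (t - 2))).coeff (e - (2 ^ k - 2 ^ ℓ)) else 0)
      = if e = 2 ^ k - 2 ^ ℓ + (t - 2) then 1 else 0 := by
    intro l hl
    rw [Finset.mem_Ico] at hl
    have hx1 : 2 ^ (k - 3) ≤ 2 ^ l := Nat.pow_le_pow_right (by norm_num) hl.1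
    have hx2 : 2 ^ l ≤ 2 ^ (k - 1) := Nat.pow_le_pow_right (by norm_num) (by omega)
    rw [hc]
    split_ifs <;> first | rfl | (exfalso; omega)
  rw [fib2_pow_sub_one k (by omega), coeff_mul_one_add_sum,
    ← Finset.sum_Ico_consecutive _ (by omega : 1 ≤ k - 3) (by omega : k - 3 ≤ k),
    sum_small_zero k t hk ht e he _ (fun e' he' => by rw [hc]; rw [if_neg (by omega)]),
    zero_add, Finset.sum_congr rfl hA]
  have e1 : Finset.Ico (k - 3) k = Finset.Ico (k - 3) (k - 1 + 1) := by congr 1; omega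
  rw [e1, Finset.sum_Ico_succ_top (by omega),
    show Finset.Ico (k - 3) (k - 1) = Finset.Ico (k - 3) (k - 2 + 1) by congr 1; omega,
    Finset.sum_Ico_succ_top (by omega),
    show Finset.Ico (k - 3) (k - 2) = Finset.Ico (k - 3) (k - 3 + 1) by congr 1; omega,
    Finset.sum_Ico_succ_top (by omega), Finset.Ico_self, Finset.sum_empty, zero_add]
  rw [h8, h4, h2, ht.symm, hc]
  split_ifs <;> first | rfl | decide | (exfalso; omega)

lemma val_xn (hk : 4 ≤ k) (ht : t = 2 ^ (k - 3)) :
    plCoord (X ^ (8 * t - 1)) 1 (2 ^ (7 * t - 2) - 2 ^ (t - 2))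
      = ((2:ℝ)⁻¹) ^ (t + 1) - ((2:ℝ)⁻¹) ^ (7 * t + 1) := by
  obtain ⟨ht2, h8, h4, h2⟩ := pow_facts k t hk ht
  have hstep : ∀ i ∈ Finset.Icc 1 (8 * t - 1),
      ((plDigit (X ^ (8 * t - 1)) 1 (2 ^ (7 * t - 2) - 2 ^ (t - 2)) i).val : ℝ) / 2 ^ i
        = if i ∈ Finset.Icc (t + 2) (7 * t + 1) then ((2:ℝ)⁻¹) ^ i else 0 := by
    intro i hi
    rw [Finset.mem_Icc] at hi
    rw [plDigit_X_pow _ _ _ _ hi.1 hi.2, mul_one, natPoly_sub_coeff _ _ _ (by omega),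
      show (if t - 2 ≤ 8 * t - 1 - i ∧ 8 * t - 1 - i < 7 * t - 2 then (1 : ZMod 2) else 0)
        = if i ∈ Finset.Icc (t + 2) (7 * t + 1) then (1 : ZMod 2) else 0 from
        if_congr (by rw [Finset.mem_Icc]; omega) rfl rfl]
    split_ifs
    · rw [show (1 : ZMod 2).val = 1 from rfl, Nat.cast_one, one_div, ← inv_pow]
    · rw [show (0 : ZMod 2).val = 0 from rfl, Nat.cast_zero, zero_div]
  unfold plCoord
  rw [Polynomial.natDegree_X_pow, Finset.sum_congr rfl hstep, Finset.sum_ite_mem,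
    Finset.inter_eq_right.2 (Finset.Icc_subset_Icc (by omega) (by omega)),
    ← Finset.Ico_add_one_right_eq_Icc, geom_sum_Ico (by norm_num : ((2:ℝ)⁻¹) ≠ 1) (by omega)]
  have hp : ∀ c d : ℕ, ((2:ℝ)⁻¹) ^ (c * t + d) = (((2:ℝ)⁻¹) ^ t) ^ c * ((2:ℝ)⁻¹) ^ d := by
    intro c d
    rw [pow_add, pow_mul']
  rw [show 7 * t + 1 + 1 = 7 * t + 2 by omega, show t + 2 = 1 * t + 2 by ring,
    show t + 1 = 1 * t + 1 by ring, hp, hp, hp, hp, div_eq_iff (by norm_num : ((2:ℝ)⁻¹) - 1 ≠ 0)]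
  ring

lemma val_xn' (hk : 4 ≤ k) (ht : t = 2 ^ (k - 3)) :
    plCoord (X ^ (8 * t - 1)) 1 (2 ^ (7 * t - 2) + 2 ^ (t - 2))
      = ((2:ℝ)⁻¹) ^ (t + 1) + ((2:ℝ)⁻¹) ^ (7 * t + 1) := by
  obtain ⟨ht2, h8, h4, h2⟩ := pow_facts k t hk ht
  have hstep : ∀ i ∈ Finset.Icc 1 (8 * t - 1),
      ((plDigit (X ^ (8 * t - 1)) 1 (2 ^ (7 * t - 2) + 2 ^ (t - 2)) i).val : ℝ) / 2 ^ i
        = if i ∈ ({t + 1, 7 * t + 1} : Finset ℕ) then ((2:ℝ)⁻¹) ^ i else 0 := by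
    intro i hi
    rw [Finset.mem_Icc] at hi
    rw [plDigit_X_pow _ _ _ _ hi.1 hi.2, mul_one, natPoly_add_coeff _ _ _ (by omega),
      show (if 8 * t - 1 - i = 7 * t - 2 ∨ 8 * t - 1 - i = t - 2 then (1 : ZMod 2) else 0)
        = if i ∈ ({t + 1, 7 * t + 1} : Finset ℕ) then (1 : ZMod 2) else 0 from
        if_congr (by simp only [Finset.mem_insert, Finset.mem_singleton]; omega) rfl rfl]
    split_ifs
    · rw [show (1 : ZMod 2).val = 1 from rfl, Nat.cast_one, one_div, ← inv_pow]
    · rw [show (0 : ZMod 2).val = 0 from rfl, Nat.cast_zero, zero_div]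
  unfold plCoord
  rw [Polynomial.natDegree_X_pow, Finset.sum_congr rfl hstep, Finset.sum_ite_mem,
    Finset.inter_eq_right.2 (by
      intro x hx
      simp only [Finset.mem_insert, Finset.mem_singleton] at hx
      rw [Finset.mem_Icc]
      omega),
    Finset.sum_pair (by omega : t + 1 ≠ 7 * t + 1)]

lemma val_yn (hk : 4 ≤ k) (ht : t = 2 ^ (k - 3)) :
    plCoord (X ^ (8 * t - 1)) (fib2 (2 ^ k - 1)) (2 ^ (7 * t - 2) - 2 ^ (t - 2))
      = (2:ℝ)⁻¹ + ((2:ℝ)⁻¹) ^ (3 * t + 1) - ((2:ℝ)⁻¹) ^ (7 * t + 1) := by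
  obtain ⟨ht2, h8, h4, h2⟩ := pow_facts k t hk ht
  have hstep : ∀ i ∈ Finset.Icc 1 (8 * t - 1),
      ((plDigit (X ^ (8 * t - 1)) (fib2 (2 ^ k - 1)) (2 ^ (7 * t - 2) - 2 ^ (t - 2)) i).val : ℝ)
          / 2 ^ i
        = if i ∈ insert 1 (Finset.Icc (3 * t + 2) (7 * t + 1)) then ((2:ℝ)⁻¹) ^ i else 0 := by
    intro i hi
    rw [Finset.mem_Icc] at hi
    rw [plDigit_X_pow _ _ _ _ hi.1 hi.2, ydigit_n k t hk ht _ (by omega),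
      show (if (t - 2 ≤ 8 * t - 1 - i ∧ 8 * t - 1 - i ≤ 5 * t - 3) ∨ 8 * t - 1 - i = 8 * t - 2
            then (1 : ZMod 2) else 0)
        = if i ∈ insert 1 (Finset.Icc (3 * t + 2) (7 * t + 1)) then (1 : ZMod 2) else 0 from
        if_congr (by simp only [Finset.mem_insert, Finset.mem_Icc]; omega) rfl rfl]
    split_ifs
    · rw [show (1 : ZMod 2).val = 1 from rfl, Nat.cast_one, one_div, ← inv_pow]
    · rw [show (0 : ZMod 2).val = 0 from rfl, Nat.cast_zero, zero_div]
  unfold plCoord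
  rw [Polynomial.natDegree_X_pow, Finset.sum_congr rfl hstep, Finset.sum_ite_mem,
    Finset.inter_eq_right.2 (by
      intro x hx
      simp only [Finset.mem_insert, Finset.mem_Icc] at hx
      rw [Finset.mem_Icc]
      omega),
    Finset.sum_insert (by rw [Finset.mem_Icc]; omega), pow_one,
    ← Finset.Ico_add_one_right_eq_Icc, geom_sum_Ico (by norm_num : ((2:ℝ)⁻¹) ≠ 1) (by omega)]
  have hp : ∀ c d : ℕ, ((2:ℝ)⁻¹) ^ (c * t + d) = (((2:ℝ)⁻¹) ^ t) ^ c * ((2:ℝ)⁻¹) ^ d := by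
    intro c d
    rw [pow_add, pow_mul']
  rw [show 7 * t + 1 + 1 = 7 * t + 2 by omega, show 3 * t + 2 = 3 * t + 2 by ring,
    show 3 * t + 1 = 3 * t + 1 by ring, hp, hp, hp, hp]
  have h21 : ((2:ℝ)⁻¹) - 1 ≠ 0 := by norm_num
  field_simp
  ring

lemma val_yn' (hk : 4 ≤ k) (ht : t = 2 ^ (k - 3)) :
    plCoord (X ^ (8 * t - 1)) (fib2 (2 ^ k - 1)) (2 ^ (7 * t - 2) + 2 ^ (t - 2))
      = (2:ℝ)⁻¹ + ((2:ℝ)⁻¹) ^ (3 * t + 1) + ((2:ℝ)⁻¹) ^ (7 * t + 1) := by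
  obtain ⟨ht2, h8, h4, h2⟩ := pow_facts k t hk ht
  have hstep : ∀ i ∈ Finset.Icc 1 (8 * t - 1),
      ((plDigit (X ^ (8 * t - 1)) (fib2 (2 ^ k - 1)) (2 ^ (7 * t - 2) + 2 ^ (t - 2)) i).val : ℝ)
          / 2 ^ i
        = if i ∈ ({1, 3 * t + 1, 7 * t + 1} : Finset ℕ) then ((2:ℝ)⁻¹) ^ i else 0 := by
    intro i hi
    rw [Finset.mem_Icc] at hi
    rw [plDigit_X_pow _ _ _ _ hi.1 hi.2, ydigit_n' k t hk ht _ (by omega),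
      show (if 8 * t - 1 - i = 8 * t - 2 ∨ 8 * t - 1 - i = 5 * t - 2 ∨ 8 * t - 1 - i = t - 2
            then (1 : ZMod 2) else 0)
        = if i ∈ ({1, 3 * t + 1, 7 * t + 1} : Finset ℕ) then (1 : ZMod 2) else 0 from
        if_congr (by simp only [Finset.mem_insert, Finset.mem_singleton]; omega) rfl rfl]
    split_ifs
    · rw [show (1 : ZMod 2).val = 1 from rfl, Nat.cast_one, one_div, ← inv_pow]
    · rw [show (0 : ZMod 2).val = 0 from rfl, Nat.cast_zero, zero_div]
  unfold plCoord
  rw [Polynomial.natDegree_X_pow, Finset.sum_congr rfl hstep, Finset.sum_ite_mem,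
    Finset.inter_eq_right.2 (by
      intro x hx
      simp only [Finset.mem_insert, Finset.mem_singleton] at hx
      rw [Finset.mem_Icc]
      omega)]
  rw [show ({1, 3 * t + 1, 7 * t + 1} : Finset ℕ)
      = insert 1 (insert (3 * t + 1) {7 * t + 1}) from rfl,
    Finset.sum_insert (by simp only [Finset.mem_insert, Finset.mem_singleton]; omega),
    Finset.sum_insert (by simp only [Finset.mem_singleton]; omega), Finset.sum_singleton,
    pow_one, add_assoc]

end main

/-- For `k ≥ 4`, `m = 2^k−1`, `m' = 2^{k−3}−1` and the Fibonacci polynomial lattice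
`Q_m = Q(f_{m+1}, (1, f_m))` with `2^m` points: for `n = 2^{m−m'−2} − 2^{m'−1}` and
`n' = 2^{m−m'−2} + 2^{m'−1}` one has `‖x_n − x_{n'}‖_∞ = 2^{−m+m'}`; in particular, with
`N = 2^m`, the separation radius satisfies `q_∞(Q_m) ≤ 2^{−15/8} N^{−7/8}`. -/
theorem stmt15 (k : ℕ) (hk : 4 ≤ k) :
    ∀ m m' n n' : ℕ, m = 2 ^ k - 1 → m' = 2 ^ (k - 3) - 1 →
    n = 2 ^ (m - m' - 2) - 2 ^ (m' - 1) → n' = 2 ^ (m - m' - 2) + 2 ^ (m' - 1) →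
    ∀ pt : ℕ → ℝ × ℝ,
      (pt = fun a => (plCoord (fib2 (m + 1)) 1 a, plCoord (fib2 (m + 1)) (fib2 m) a)) →
    dist (pt n) (pt n') = (2 : ℝ) ^ ((m' : ℤ) - (m : ℤ)) ∧
    sInf {r : ℝ | ∃ a < 2 ^ m, ∃ c < 2 ^ m, pt a ≠ pt c ∧ r = dist (pt a) (pt c) / 2}
      ≤ (2 : ℝ) ^ (-(15 : ℝ) / 8) * (((2 : ℝ) ^ m) ^ (-(7 : ℝ) / 8)) := by
  intro m m' n n' hm hm' hn hn' pt hpt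
  set t : ℕ := 2 ^ (k - 3) with htdef
  obtain ⟨ht2, h8, h4, h2⟩ := pow_facts k t hk rfl
  have hm8 : m = 8 * t - 1 := by omega
  have hm'8 : m' = t - 1 := by omega
  have hnn : n = 2 ^ (7 * t - 2) - 2 ^ (t - 2) := by
    rw [hn, show m - m' - 2 = 7 * t - 2 by omega, show m' - 1 = t - 2 by omega]
  have hnn' : n' = 2 ^ (7 * t - 2) + 2 ^ (t - 2) := by
    rw [hn', show m - m' - 2 = 7 * t - 2 by omega, show m' - 1 = t - 2 by omega]
  have hfib : fib2 (m + 1) = X ^ (8 * t - 1) := by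
    rw [show m + 1 = 2 ^ k by omega, fib2_two_pow, show 2 ^ k - 1 = 8 * t - 1 by omega]
  have hqm : fib2 m = fib2 (2 ^ k - 1) := by rw [hm]
  have hzm : (m' : ℤ) - (m : ℤ) = -((7 * t : ℕ) : ℤ) := by push_cast; omega
  have hb : (0:ℝ) < ((2:ℝ)⁻¹) ^ (7 * t) := by positivity
  have hdiff : ∀ c : ℝ, |(c - ((2:ℝ)⁻¹) ^ (7 * t + 1)) - (c + ((2:ℝ)⁻¹) ^ (7 * t + 1))|
      = ((2:ℝ)⁻¹) ^ (7 * t) := by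
    intro c
    rw [show (c - ((2:ℝ)⁻¹) ^ (7 * t + 1)) - (c + ((2:ℝ)⁻¹) ^ (7 * t + 1))
        = -(((2:ℝ)⁻¹) ^ (7 * t)) from by rw [pow_succ]; ring, abs_neg, abs_of_pos hb]
  have hdist : dist (pt n) (pt n') = ((2:ℝ)⁻¹) ^ (7 * t) := by
    simp only [hpt]
    rw [Prod.dist_eq]
    simp only [Prod.fst, Prod.snd]
    rw [hfib, hqm, hnn, hnn', val_xn k t hk rfl, val_xn' k t hk rfl, val_yn k t hk rfl,
      val_yn' k t hk rfl, Real.dist_eq, Real.dist_eq, hdiff, hdiff, max_self]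
  have hzval : (2:ℝ) ^ ((m' : ℤ) - (m : ℤ)) = ((2:ℝ)⁻¹) ^ (7 * t) := by
    rw [hzm, zpow_neg, zpow_natCast, ← inv_pow]
  constructor
  · rw [hdist, hzval]
  · have hAlt : 2 ^ (t - 2) < 2 ^ (7 * t - 2) := Nat.pow_lt_pow_right (by norm_num) (by omega)
    have hC : 2 ^ m = 2 ^ (7 * t - 2) * 2 ^ (t + 1) := by
      rw [← pow_add]
      congr 1
      omega
    have hE : 2 ^ (7 * t - 2) * 2 ≤ 2 ^ (7 * t - 2) * 2 ^ (t + 1) :=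
      Nat.mul_le_mul_left _ (by
        calc 2 = 2 ^ 1 := (pow_one 2).symm
        _ ≤ 2 ^ (t + 1) := Nat.pow_le_pow_right (by norm_num) (by omega))
    have hB0 : 0 < 2 ^ (t - 2) := Nat.pow_pos (n := _) (by norm_num)
    have hnlt : n < 2 ^ m := by rw [hnn, hC]; omega
    have hn'lt : n' < 2 ^ m := by rw [hnn', hC]; omega
    have hne : pt n ≠ pt n' := by
      rw [← dist_ne_zero, hdist]
      positivity
    have hmem : ((2:ℝ)⁻¹) ^ (7 * t) / 2
        ∈ {r : ℝ | ∃ a < 2 ^ m, ∃ c < 2 ^ m, pt a ≠ pt c ∧ r = dist (pt a) (pt c) / 2} :=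
      ⟨n, hnlt, n', hn'lt, hne, by rw [hdist]⟩
    have hbdd : BddBelow {r : ℝ | ∃ a < 2 ^ m, ∃ c < 2 ^ m, pt a ≠ pt c ∧ r = dist (pt a) (pt c) / 2} := by
      refine ⟨0, fun r hr => ?_⟩
      obtain ⟨a, _, c, _, _, hr⟩ := hr
      rw [hr]
      positivity
    have hle := csInf_le hbdd hmem
    refine le_trans hle (le_of_eq ?_)
    have hmr : (m : ℝ) = 8 * (t : ℝ) - 1 := by
      rw [hm8, Nat.cast_sub (by omega : 1 ≤ 8 * t)]
      push_cast
      ring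
    rw [← Real.rpow_natCast 2 m, ← Real.rpow_mul (by norm_num : (0:ℝ) ≤ 2),
      ← Real.rpow_add (by norm_num : (0:ℝ) < 2)]
    have hexp : -(15:ℝ) / 8 + (m : ℝ) * (-(7:ℝ) / 8) = ((-(7 * (t:ℤ)) - 1 : ℤ) : ℝ) := by
      rw [hmr]
      push_cast
      ring
    rw [hexp, Real.rpow_intCast, zpow_sub₀ (by norm_num : (2:ℝ) ≠ 0), zpow_one, zpow_neg]
    rw [show (7 * (t:ℤ)) = ((7 * t : ℕ) : ℤ) by push_cast; ring, zpow_natCast, ← inv_pow]
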